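/- Let H ∈ Sym_d with ‖H‖_op ≤ L_G, let g, v ∈ ℝ^d with ‖v‖ ≤ Δ/2, and set m(w) = ⟨g,w⟩ + (1/2)⟨w,Hw⟩, r = -∇m(v). Suppose ⟨r, Hr⟩ ≤ 0 and u = v + s'r with s' ≥ 0 chosen so that ‖u‖ = Δ. Then m(v) - m(u) ≥ (Δ/2)·(s'‖r‖/Δ)·‖r‖ ≥ (Δ/4)‖r‖; in particular s' ≥ Δ/(2‖r‖) (assuming r ≠ 0) and m(u) - m(v) ≤ -s'‖r‖². -/

import Mathlib

open RealInnerProductSpace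

/-! Along `r = -∇m(v)` the model changes by `-s‖r‖² + (s²/2)⟪r, H r⟫`, and the curvature
term is nonpositive, so the step decreases `m` by at least `s‖r‖²`. Since `‖v‖ ≤ Δ/2` and the
step ends on the sphere of radius `Δ`, the triangle inequality forces `s‖r‖ ≥ Δ/2`. -/

section QuadraticModel

variable {E : Type*} [NormedAddCommGroup E] [InnerProductSpace ℝ E]

noncomputable def quadModel (g : E) (H : E →ₗ[ℝ] E) (w : E) : ℝ :=
  ⟪g, w⟫ + 1 / 2 * ⟪w, H w⟫

theorem quadModel_add_smul {H : E →ₗ[ℝ] E} (hH : H.IsSymmetric) (g v w : E) (t : ℝ) :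
    quadModel g H (v + t • w) = quadModel g H v + t * ⟪H v + g, w⟫ + t ^ 2 / 2 * ⟪w, H w⟫ := by
  have hvw : ⟪w, H v⟫ = ⟪H v, w⟫ := real_inner_comm _ _
  have hwv : ⟪v, H w⟫ = ⟪H v, w⟫ := (hH v w).symm
  simp only [quadModel, map_add, map_smul, inner_add_left, inner_add_right, real_inner_smul_left,
    real_inner_smul_right, hvw, hwv]
  ring

theorem quadModel_add_smul_neg_grad_le {H : E →ₗ[ℝ] E} (hH : H.IsSymmetric) {g v r : E}
    (hr : r = -(H v + g)) (hcurv : ⟪r, H r⟫ ≤ 0) (t : ℝ) :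
    quadModel g H (v + t • r) - quadModel g H v ≤ -(t * ‖r‖ ^ 2) := by
  have hgrad : H v + g = -r := by rw [hr, neg_neg]
  rw [quadModel_add_smul hH, hgrad, inner_neg_left, real_inner_self_eq_norm_sq]
  linarith [mul_nonpos_of_nonneg_of_nonpos (sq_nonneg t) hcurv]

end QuadraticModel

theorem half_le_mul_norm_of_norm_add_smul_eq {E : Type*} [SeminormedAddCommGroup E]
    [NormedSpace ℝ E] {v r : E} {Δ s : ℝ} (hv : ‖v‖ ≤ Δ / 2) (hs : 0 ≤ s)
    (hΔ : ‖v + s • r‖ = Δ) : Δ / 2 ≤ s * ‖r‖ := by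
  have htriangle := norm_add_le v (s • r)
  rw [hΔ, norm_smul, Real.norm_of_nonneg hs] at htriangle
  linarith

theorem boundary_gradient_step_nonpositive_curvature_general
    {d : ℕ} (H : EuclideanSpace ℝ (Fin d) →L[ℝ] EuclideanSpace ℝ (Fin d))
    (hsymm : ∀ a b, ⟪H a, b⟫ = ⟪a, H b⟫)
    (g v r u : EuclideanSpace ℝ (Fin d)) (Δ : ℝ) (hΔ : 0 < Δ) (hv : ‖v‖ ≤ Δ / 2)
    (m : EuclideanSpace ℝ (Fin d) → ℝ)
    (hm : ∀ w, m w = ⟪g, w⟫ + (1 / 2) * ⟪w, H w⟫)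
    (hr : r = -(H v + g))
    (hcurv : ⟪r, H r⟫ ≤ 0)
    (s' : ℝ) (hs' : 0 ≤ s') (hu : u = v + s' • r) (huΔ : ‖u‖ = Δ) :
    (Δ / 2 * (s' * ‖r‖ / Δ) * ‖r‖ ≤ m v - m u) ∧
    (Δ / 4 * ‖r‖ ≤ Δ / 2 * (s' * ‖r‖ / Δ) * ‖r‖) ∧
    (r ≠ 0 → Δ / (2 * ‖r‖) ≤ s') ∧
    (m u - m v ≤ -(s' * ‖r‖ ^ 2)) := by
  have hmodel : m = quadModel g (H : EuclideanSpace ℝ (Fin d) →ₗ[ℝ] _) := funext hm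
  have hdecrease : m u - m v ≤ -(s' * ‖r‖ ^ 2) := by
    subst hmodel hu
    exact quadModel_add_smul_neg_grad_le hsymm hr hcurv s'
  have hstep : Δ / 2 ≤ s' * ‖r‖ := half_le_mul_norm_of_norm_add_smul_eq hv hs' (hu ▸ huΔ)
  have hpred : Δ / 2 * (s' * ‖r‖ / Δ) * ‖r‖ = s' * ‖r‖ ^ 2 / 2 := by field_simp
  have hr_nonneg := norm_nonneg r
  refine ⟨?_, ?_, fun hr_ne => ?_, hdecrease⟩
  · rw [hpred]; linarith [mul_nonneg hs' (sq_nonneg ‖r‖)]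
  · rw [hpred]; nlinarith
  · rw [div_le_iff₀ (mul_pos two_pos (norm_pos_iff.mpr hr_ne))]
    linarith

/-- Decrease of a boundary-constrained gradient step on the quadratic model in a
direction of nonpositive curvature (Case 3 in the proof of Lemma `cauchy_step`). -/
theorem boundary_gradient_step_nonpositive_curvature
    {d : ℕ} (H : EuclideanSpace ℝ (Fin d) →L[ℝ] EuclideanSpace ℝ (Fin d))
    (hsymm : ∀ a b, ⟪H a, b⟫ = ⟪a, H b⟫)
    (L_G : ℝ) (hH : ‖H‖ ≤ L_G)
    (g v r u : EuclideanSpace ℝ (Fin d)) (Δ : ℝ) (hΔ : 0 < Δ) (hv : ‖v‖ ≤ Δ / 2)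
    (m : EuclideanSpace ℝ (Fin d) → ℝ)
    (hm : ∀ w, m w = ⟪g, w⟫ + (1 / 2) * ⟪w, H w⟫)
    (hr : r = -(H v + g))
    (hcurv : ⟪r, H r⟫ ≤ 0)
    (s' : ℝ) (hs' : 0 ≤ s') (hu : u = v + s' • r) (huΔ : ‖u‖ = Δ) :
    (Δ / 2 * (s' * ‖r‖ / Δ) * ‖r‖ ≤ m v - m u) ∧
    (Δ / 4 * ‖r‖ ≤ Δ / 2 * (s' * ‖r‖ / Δ) * ‖r‖) ∧
    (r ≠ 0 → Δ / (2 * ‖r‖) ≤ s') ∧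
    (m u - m v ≤ -(s' * ‖r‖ ^ 2)) :=
  boundary_gradient_step_nonpositive_curvature_general H hsymm g v r u Δ hΔ hv m hm hr hcurv s' hs'
    hu huΔ
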